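/- Let G be an HRLQ instance, and suppose M1 is a matching of G that is stable in the instance G1 and satisfies |M1(h)| = q⁻(h) for every hospital h. Let M2 be a stable matching of the instance G' defined from M1, and let M = M1 ∪ M2. Then for every edge (r,h) ∈ E \ M, the set M ∪ {(r,h)} is not an envy-free matching of G: either it violates the matching constraints (r is already matched in M or |M(h)| = q⁺(h)), or some resident has justified envy with respect to M ∪ {(r,h)}. -/

import Mathlib

open scoped Classical

/-- An HRLQ instance on residents `R` and hospitals `H`: an edge set (acceptability
relation), strict preference relations of residents over hospitals and of hospitals
over residents (strict, transitive, total over neighbors), and lower/upper quotas. -/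
structure HRLQ (R H : Type) where
  E : Finset (R × H)
  /-- `rp r h h'` : resident `r` strictly prefers hospital `h` over `h'`. -/
  rp : R → H → H → Prop
  /-- `hp h r r'` : hospital `h` strictly prefers resident `r` over `r'`. -/
  hp : H → R → R → Prop
  lq : H → ℕ
  uq : H → ℕ
  lq_le_uq : ∀ h, lq h ≤ uq h
  uq_pos : ∀ h, 1 ≤ uq h
  rp_irrefl : ∀ r h, ¬ rp r h h
  rp_trans : ∀ r h₁ h₂ h₃, rp r h₁ h₂ → rp r h₂ h₃ → rp r h₁ h₃
  rp_total : ∀ r h₁ h₂, (r, h₁) ∈ E → (r, h₂) ∈ E → h₁ ≠ h₂ → rp r h₁ h₂ ∨ rp r h₂ h₁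
  hp_irrefl : ∀ h r, ¬ hp h r r
  hp_trans : ∀ h r₁ r₂ r₃, hp h r₁ r₂ → hp h r₂ r₃ → hp h r₁ r₃
  hp_total : ∀ h r₁ r₂, (r₁, h) ∈ E → (r₂, h) ∈ E → r₁ ≠ r₂ → hp h r₁ r₂ ∨ hp h r₂ r₁

namespace HRLQ

variable {R H : Type} [Fintype R] [Fintype H] [DecidableEq R] [DecidableEq H]

/-- `M(h)`: the set of residents assigned to hospital `h` by `M`.
A matching is represented as a function `M : R → Option H` assigning to each resident
at most one hospital (`none` = unmatched). -/
noncomputable def assigned (M : R → Option H) (h : H) : Finset R :=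
  Finset.univ.filter fun r => M r = some h

/-- `M` is a matching with respect to edge set `E` and upper quotas `q`:
every matched pair is an edge and no hospital exceeds its upper quota.
(Each resident is matched to at most one hospital by the functional representation.) -/
def IsMatchingIn (E : Finset (R × H)) (q : H → ℕ) (M : R → Option H) : Prop :=
  (∀ r h, M r = some h → (r, h) ∈ E) ∧ ∀ h, (assigned M h).card ≤ q h

/-- `M` is a matching of the instance `G`. -/
def IsMatching (G : HRLQ R H) (M : R → Option H) : Prop :=
  IsMatchingIn G.E G.uq M

/-- `M` is a feasible matching of `G`: a matching meeting all lower quotas. -/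
def Feasible (G : HRLQ R H) (M : R → Option H) : Prop :=
  IsMatching G M ∧ ∀ h, G.lq h ≤ (assigned M h).card

/-- Resident `r` is unmatched in `M` or prefers `h` over `M(r)`. -/
def WantsMore (G : HRLQ R H) (M : R → Option H) (r : R) (h : H) : Prop :=
  ∀ h', M r = some h' → G.rp r h h'

/-- The pair `(r,h)` blocks `M`, with respect to edge set `E` and upper quotas `q`. -/
def BlocksIn (G : HRLQ R H) (E : Finset (R × H)) (q : H → ℕ)
    (M : R → Option H) (r : R) (h : H) : Prop :=
  (r, h) ∈ E ∧ M r ≠ some h ∧ WantsMore G M r h ∧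
    ((assigned M h).card < q h ∨ ∃ r' ∈ assigned M h, G.hp h r r')

/-- The pair `(r,h)` blocks `M` in the instance `G`. -/
def Blocks (G : HRLQ R H) (M : R → Option H) (r : R) (h : H) : Prop :=
  BlocksIn G G.E G.uq M r h

/-- `M` is stable in `G`: no blocking pair. -/
def Stable (G : HRLQ R H) (M : R → Option H) : Prop :=
  ∀ r h, ¬ Blocks G M r h

/-- Resident `r` has justified envy toward `r'` (matched to some hospital `h`) w.r.t. `M`. -/
def JustifiedEnvy (G : HRLQ R H) (M : R → Option H) (r r' : R) : Prop :=
  ∃ h, M r' = some h ∧ (r, h) ∈ G.E ∧ G.hp h r r' ∧ WantsMore G M r h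

/-- `M` is envy-free: no resident has justified envy toward another. -/
def EnvyFree (G : HRLQ R H) (M : R → Option H) : Prop :=
  ∀ r r', ¬ JustifiedEnvy G M r r'

/-- `M` is a maximal envy-free matching of `G`: it is envy-free, and for every edge
`(r,h) ∈ E \ M`, `M ∪ {(r,h)}` is not an envy-free matching (either it is not a valid
matching, or it is not envy-free). -/
def MaximalEnvyFree (G : HRLQ R H) (M : R → Option H) : Prop :=
  EnvyFree G M ∧ ∀ r h, (r, h) ∈ G.E → M r ≠ some h →
    ¬ (M r = none ∧ IsMatching G (Function.update M r (some h)) ∧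
        EnvyFree G (Function.update M r (some h)))

/-- `r'` is a candidate threshold resident for `h` w.r.t. `M1`: a neighbor of `h`
that is matched in `M1` and prefers `h` over its `M1`-partner. -/
def ThresholdCand (G : HRLQ R H) (M1 : R → Option H) (h : H) (r' : R) : Prop :=
  (r', h) ∈ G.E ∧ ∃ h', M1 r' = some h' ∧ G.rp r' h h'

/-- `rho` is the threshold resident of `h` w.r.t. `M1` (`none` encodes the dummy
resident used when no candidate exists): the candidate most preferred by `h`. -/
def IsThreshold (G : HRLQ R H) (M1 : R → Option H) (h : H) : Option R → Prop
  | none => ∀ r', ¬ ThresholdCand G M1 h r'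
  | some rh => ThresholdCand G M1 h rh ∧
      ∀ r', ThresholdCand G M1 h r' → r' ≠ rh → G.hp h rh r'

/-- `h` prefers `r` over the threshold resident `rho` (`none` = dummy resident,
less preferred by `h` than any neighbor). -/
def PrefThreshold (G : HRLQ R H) (h : H) : Option R → R → Prop
  | none, _ => True
  | some rh, r => G.hp h r rh

/-- The edge set `E'` of the reduced instance `G'` built from `M1` and the threshold
residents `rho`: edges `(r,h) ∈ E` with `r` unmatched in `M1` (i.e. `r ∈ R'`),
`h` under-subscribed (i.e. `h ∈ H'`), and `h` preferring `r` over its threshold resident. -/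
noncomputable def Ered (G : HRLQ R H) (M1 : R → Option H) (rho : H → Option R) :
    Finset (R × H) :=
  G.E.filter fun p =>
    M1 p.1 = none ∧ (assigned M1 p.2).card < G.uq p.2 ∧
      PrefThreshold G p.2 (rho p.2) p.1

/-- The upper quotas of the reduced instance `G'`. -/
def qred (G : HRLQ R H) : H → ℕ := fun h => G.uq h - G.lq h

/-- The union `M1 ∪ M2` of two matchings (with disjoint sets of matched residents). -/
def munion (M1 M2 : R → Option H) : R → Option H := fun r =>
  match M1 r with
  | some h => some h
  | none => M2 r

/-- The vote of resident `r` comparing assignment `a` (in `M`) with `b` (in `M'`):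
`1` if `r` prefers `a`, `-1` if `r` prefers `b`, `0` otherwise; being unmatched is
less preferred than being matched to any neighbor. -/
noncomputable def rvote (G : HRLQ R H) (r : R) (a b : Option H) : ℤ :=
  if a = b then 0
  else
    match a, b with
    | none, _ => -1
    | _, none => 1
    | some h, some h' => if G.rp r h h' then 1 else if G.rp r h' h then -1 else 0

/-- `P` encodes a legal correspondence `corr_h` for hospital `h` comparing `M` with `M'`:
a pairing of `M(h) \ M'(h)` with `M'(h) \ M(h)` (unpaired residents being paired with
distinct dummy residents after padding both sides to size `q⁺(h)`). -/
def IsCorr (G : HRLQ R H) (M M' : R → Option H) (h : H) (P : Finset (R × R)) : Prop :=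
  (∀ p ∈ P, p.1 ∈ assigned M h \ assigned M' h ∧ p.2 ∈ assigned M' h \ assigned M h) ∧
  (∀ p ∈ P, ∀ q ∈ P, (p.1 = q.1 ∨ p.2 = q.2) → p = q) ∧
  (assigned M h \ assigned M' h).card + (assigned M' h \ assigned M h).card - P.card
    ≤ G.uq h

/-- The total vote of hospital `h` comparing `M` with `M'` under the correspondence `P`
(positive contributions favor `M`): paired residents are compared by `h`'s preference;
a resident of `M(h) \ M'(h)` paired with a dummy contributes `+1`; a dummy paired with a
resident of `M'(h) \ M(h)` contributes `-1`; dummy-dummy pairs contribute `0`. -/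
noncomputable def hvote (G : HRLQ R H) (M M' : R → Option H) (h : H)
    (P : Finset (R × R)) : ℤ :=
  (∑ p ∈ P, if G.hp h p.1 p.2 then (1 : ℤ) else -1)
    + (((assigned M h \ assigned M' h).card - P.card : ℕ) : ℤ)
    - (((assigned M' h \ assigned M h).card - P.card : ℕ) : ℤ)

/-- The total vote of all residents and hospitals comparing `M` with `M'` under the
correspondences `P`; positive values favor `M`, negative values favor `M'`. -/
noncomputable def totalVote (G : HRLQ R H) (M M' : R → Option H)
    (P : H → Finset (R × R)) : ℤ :=
  (∑ r, rvote G r (M r) (M' r)) + ∑ h, hvote G M M' h (P h)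

/-- `M'` is more popular than `M` with respect to the chosen correspondences `P`. -/
def MorePopular (G : HRLQ R H) (M' M : R → Option H) (P : H → Finset (R × R)) : Prop :=
  totalVote G M M' P < 0

/-- `M` is a feasible matching popular amongst the set of feasible matchings: no feasible
matching `M'` is more popular than `M` under any choice of correspondences. -/
def PopularAmongFeasible (G : HRLQ R H) (M : R → Option H) : Prop :=
  Feasible G M ∧ ∀ M' P, Feasible G M' → (∀ h, IsCorr G M M' h (P h)) →
    ¬ MorePopular G M' M P

/-- `M` is a popular matching: no matching `M'` is more popular than `M` under any
choice of correspondences. -/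
def Popular (G : HRLQ R H) (M : R → Option H) : Prop :=
  IsMatching G M ∧ ∀ M' P, IsMatching G M' → (∀ h, IsCorr G M M' h (P h)) →
    ¬ MorePopular G M' M P

/-- The size of a matching: the number of matched residents. -/
noncomputable def msize (M : R → Option H) : ℕ :=
  (Finset.univ.filter fun r => M r ≠ none).card

/-- Resident `r` is matched in `M` to its rank-1 (most preferred) hospital. -/
def Rank1 (G : HRLQ R H) (M : R → Option H) (r : R) : Prop :=
  ∃ h, M r = some h ∧ ∀ h', (r, h') ∈ G.E → h' ≠ h → G.rp r h h'

/-- The number of residents matched to their rank-1 hospital in `M`. -/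
noncomputable def rank1Count (G : HRLQ R H) (M : R → Option H) : ℕ :=
  (Finset.univ.filter fun r => Rank1 G M r).card

/-- The number of residents who prefer their assignment in `M` over that in `M'`. -/
noncomputable def prefCount (G : HRLQ R H) (M M' : R → Option H) : ℕ :=
  (Finset.univ.filter fun r => rvote G r (M r) (M' r) = 1).card

end HRLQ

/-!
Let `r` be unmatched in `M = M1 ∪ M2` and let `h` have a free seat in `M`. Since `|M1(h)| = q⁻(h)`,
the free seat lies in the `q⁺(h) - q⁻(h)` seats of `h` in `G'`, so `(r, h)` is not an edge of `G'`
(it would block `M2` there). Hence `h` ranks `r` below its threshold resident `r_h`, who is matched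
in `M1` to a hospital it likes less than `h`; in `M ∪ {(r, h)}`, `r_h` has justified envy toward `r`.
-/

namespace HRLQ

variable {R H : Type}

section munion

variable {M1 M2 : R → Option H} {r : R} {h : H}

theorem munion_of_eq_some (hr : M1 r = some h) : munion M1 M2 r = some h := by
  simp [munion, hr]

theorem munion_of_eq_none (hr : M1 r = none) : munion M1 M2 r = M2 r := by
  simp [munion, hr]

theorem munion_eq_none_iff : munion M1 M2 r = none ↔ M1 r = none ∧ M2 r = none := by
  cases hr : M1 r <;> simp [munion, hr]

variable [Fintype R] [DecidableEq H]

theorem assigned_munion (hdisj : ∀ r h, M2 r = some h → M1 r = none) :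
    assigned (munion M1 M2) h = assigned M1 h ∪ assigned M2 h := by
  ext r
  simp only [assigned, Finset.mem_filter, Finset.mem_univ, true_and, Finset.mem_union]
  cases hr : M1 r with
  | none => simp [munion_of_eq_none hr]
  | some h₀ =>
    have : M2 r ≠ some h := fun h2 => by simp [hdisj r h h2] at hr
    simp [munion_of_eq_some hr, this]

theorem card_assigned_munion (hdisj : ∀ r h, M2 r = some h → M1 r = none) :
    (assigned (munion M1 M2) h).card = (assigned M1 h).card + (assigned M2 h).card := by
  refine assigned_munion hdisj ▸ Finset.card_union_of_disjoint (Finset.disjoint_left.2 ?_)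
  intro r h1 h2
  simp only [assigned, Finset.mem_filter, Finset.mem_univ, true_and] at h1 h2
  simp [hdisj r h h2] at h1

end munion

section blocking

variable [Fintype R] [DecidableEq H]

theorem mem_Ered {G : HRLQ R H} {M1 : R → Option H} {rho : H → Option R} {r : R} {h : H} :
    (r, h) ∈ Ered G M1 rho ↔ (r, h) ∈ G.E ∧ M1 r = none ∧
      (assigned M1 h).card < G.uq h ∧ PrefThreshold G h (rho h) r := by
  simp [Ered]

theorem IsMatchingIn.eq_none_of_Ered {G : HRLQ R H} {M1 M2 : R → Option H}
    {rho : H → Option R} {q : H → ℕ} (hM2 : IsMatchingIn (Ered G M1 rho) q M2) {r : R} {h : H}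
    (hr : M2 r = some h) : M1 r = none :=
  (mem_Ered.1 (hM2.1 r h hr)).2.1

theorem blocksIn_of_eq_none_of_card_lt {G : HRLQ R H} {E : Finset (R × H)} {q : H → ℕ}
    {M : R → Option H} {r : R} {h : H} (hE : (r, h) ∈ E) (hr : M r = none)
    (hlt : (assigned M h).card < q h) : BlocksIn G E q M r h :=
  ⟨hE, by simp [hr], fun _ h' => by simp [hr] at h', Or.inl hlt⟩

end blocking

section threshold

variable {G : HRLQ R H} {M1 : R → Option H} {h : H} {r rt : R}

theorem ThresholdCand.ne_of_eq_none (hcand : ThresholdCand G M1 h rt) (hr : M1 r = none) :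
    rt ≠ r := by
  rintro rfl
  obtain ⟨-, _, hrt, -⟩ := hcand
  simp [hr] at hrt

theorem IsThreshold.exists_hp_of_not_prefThreshold {rho : Option R}
    (hrho : IsThreshold G M1 h rho) (hpref : ¬ PrefThreshold G h rho r) (hE : (r, h) ∈ G.E)
    (hr : M1 r = none) : ∃ rt, ThresholdCand G M1 h rt ∧ G.hp h rt r := by
  cases rho with
  | none => exact absurd trivial hpref
  | some rt =>
    obtain ⟨hcand, -⟩ := hrho
    exact ⟨rt, hcand,
      (G.hp_total h rt r hcand.1 hE (hcand.ne_of_eq_none hr)).resolve_right hpref⟩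

theorem ThresholdCand.justifiedEnvy_update [DecidableEq R] {M : R → Option H}
    (hcand : ThresholdCand G M1 h rt) (hhp : G.hp h rt r) (hr : M1 r = none)
    (hext : ∀ r' h', M1 r' = some h' → M r' = some h') :
    JustifiedEnvy G (Function.update M r (some h)) rt r := by
  have hne := hcand.ne_of_eq_none hr
  obtain ⟨hE, h', hrt, hpref⟩ := hcand
  refine ⟨h, by simp, hE, hhp, fun h'' hrt'' => ?_⟩
  rw [Function.update_of_ne hne, hext rt h' hrt, Option.some_inj] at hrt''
  exact hrt'' ▸ hpref

end threshold

end HRLQ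

theorem statement3_general {R H : Type} [Fintype R] [DecidableEq R] [DecidableEq H]
    (G : HRLQ R H) (M1 M2 : R → Option H) (rho : H → Option R)
    (hM1full : ∀ h, (HRLQ.assigned M1 h).card = G.lq h)
    (hrho : ∀ h, (HRLQ.assigned M1 h).card < G.uq h → HRLQ.IsThreshold G M1 h (rho h))
    (hM2 : HRLQ.IsMatchingIn (HRLQ.Ered G M1 rho) (HRLQ.qred G) M2)
    (hM2stab : ∀ r h, ¬ HRLQ.BlocksIn G (HRLQ.Ered G M1 rho) (HRLQ.qred G) M2 r h) :
    ∀ r h, (r, h) ∈ G.E → HRLQ.munion M1 M2 r ≠ some h →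
      (HRLQ.munion M1 M2 r ≠ none ∨
        (HRLQ.assigned (HRLQ.munion M1 M2) h).card = G.uq h ∨
        ∃ r₁ r₂, HRLQ.JustifiedEnvy G
          (Function.update (HRLQ.munion M1 M2) r (some h)) r₁ r₂) := by
  intro r h hE _
  refine or_iff_not_imp_left.2 fun hr => or_iff_not_imp_left.2 fun hfull => ?_
  obtain ⟨hM1r, hM2r⟩ := HRLQ.munion_eq_none_iff.1 (not_not.1 hr)
  have hcard := HRLQ.card_assigned_munion (M1 := M1) (M2 := M2) (h := h)
    fun _ _ => hM2.eq_none_of_Ered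
  have hM2h : (HRLQ.assigned M2 h).card ≤ G.uq h - G.lq h := hM2.2 h
  have hM1h := hM1full h
  have hlq := G.lq_le_uq h
  have hM2lt : (HRLQ.assigned M2 h).card < HRLQ.qred G h := by
    simp only [HRLQ.qred]
    omega
  have hM1lt : (HRLQ.assigned M1 h).card < G.uq h := by omega
  have hpref : ¬ HRLQ.PrefThreshold G h (rho h) r := fun hpref =>
    hM2stab r h (HRLQ.blocksIn_of_eq_none_of_card_lt
      (HRLQ.mem_Ered.2 ⟨hE, hM1r, hM1lt, hpref⟩) hM2r hM2lt)
  obtain ⟨rt, hcand, hhp⟩ := (hrho h hM1lt).exists_hp_of_not_prefThreshold hpref hE hM1r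
  exact ⟨rt, r, hcand.justifiedEnvy_update hhp hM1r fun _ _ => HRLQ.munion_of_eq_some⟩

/-- With `M = M1 ∪ M2` as above, for every edge `(r,h) ∈ E \ M`, the set
`M ∪ {(r,h)}` is not an envy-free matching of `G`: either the matching constraints are
violated (`r` already matched in `M`, or `|M(h)| = q⁺(h)`), or some resident has
justified envy with respect to `M ∪ {(r,h)}`. -/
theorem statement3 {R H : Type} [Fintype R] [Fintype H] [DecidableEq R] [DecidableEq H]
    (G : HRLQ R H) (M1 M2 : R → Option H) (rho : H → Option R)
    (hM1 : HRLQ.IsMatching G M1)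
    (hM1stab : ∀ r h, ¬ HRLQ.BlocksIn G G.E G.lq M1 r h)
    (hM1full : ∀ h, (HRLQ.assigned M1 h).card = G.lq h)
    (hrho : ∀ h, (HRLQ.assigned M1 h).card < G.uq h → HRLQ.IsThreshold G M1 h (rho h))
    (hM2 : HRLQ.IsMatchingIn (HRLQ.Ered G M1 rho) (HRLQ.qred G) M2)
    (hM2stab : ∀ r h, ¬ HRLQ.BlocksIn G (HRLQ.Ered G M1 rho) (HRLQ.qred G) M2 r h) :
    ∀ r h, (r, h) ∈ G.E → HRLQ.munion M1 M2 r ≠ some h →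
      (HRLQ.munion M1 M2 r ≠ none ∨
        (HRLQ.assigned (HRLQ.munion M1 M2) h).card = G.uq h ∨
        ∃ r₁ r₂, HRLQ.JustifiedEnvy G
          (Function.update (HRLQ.munion M1 M2) r (some h)) r₁ r₂) :=
  statement3_general G M1 M2 rho hM1full hrho hM2 hM2stab
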